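/- arXiv:2505.01046 — 2 statements merged into one kernel-verified Lean document; each statement's English description precedes it below -/
import Mathlib

section
/- Let $f, g \in L^1(\mathbb{R})$ and define the OLCT convolution $(f \oplus g)(x) = \sqrt{\frac{1}{2\pi i b}}\, e^{\frac{i}{2b} d u_0^2} \int_{\mathbb{R}} f(\tau)\, g(\tfrac{x}{2} - \tau)\, e^{-\frac{i}{2b}\left[a\left((\frac{x}{2}+2\tau)^2 - 6\tau^2 + \frac{x^2}{2}\right) + x u_0\right]} d\tau$. Then $f \oplus g \in L^1(\mathbb{R})$ and $\|f \oplus g\|_{L^1} \le \sqrt{\frac{4}{2\pi |b|}}\, \|f\|_{L^1}\, \|g\|_{L^1}$. -/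
open MeasureTheory Complex Filter

noncomputable def olctKernel (a b d u0 w0 : ℝ) (u x : ℝ) : ℂ :=
  (1 / (2 * (Real.pi : ℂ) * Complex.I * (b : ℂ))) ^ ((1 : ℂ) / 2) *
    Complex.exp (Complex.I / (2 * (b : ℂ)) * ((d * u0 ^ 2 : ℝ) : ℂ)) *
    Complex.exp (Complex.I / (2 * (b : ℂ)) *
      ((a * x ^ 2 + 2 * x * (u0 - u) - 2 * u * (d * u0 - b * w0) + d * u ^ 2 : ℝ) : ℂ))

noncomputable def olct (a b d u0 w0 : ℝ) (f : ℝ → ℂ) (u : ℝ) : ℂ :=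
  ∫ x : ℝ, olctKernel a b d u0 w0 u x * f x

noncomputable def olctConv (a b d u0 : ℝ) (f g : ℝ → ℂ) (x : ℝ) : ℂ :=
  (1 / (2 * (Real.pi : ℂ) * Complex.I * (b : ℂ))) ^ ((1 : ℂ) / 2) *
    Complex.exp (Complex.I / (2 * (b : ℂ)) * ((d * u0 ^ 2 : ℝ) : ℂ)) *
    ∫ τ : ℝ, f τ * g (x / 2 - τ) *
      Complex.exp (-(Complex.I / (2 * (b : ℂ))) *
        ((a * ((x / 2 + 2 * τ) ^ 2 - 6 * τ ^ 2 + x ^ 2 / 2) + x * u0 : ℝ) : ℂ))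

private lemma norm_exp_I_div (b r : ℝ) :
    ‖Complex.exp (Complex.I / (2 * (b : ℂ)) * (r : ℂ))‖ = 1 := by
  have h : Complex.I / (2 * (b : ℂ)) * (r : ℂ) = ((r / (2 * b) : ℝ) : ℂ) * Complex.I := by
    push_cast; ring
  rw [h, Complex.norm_exp_ofReal_mul_I]

private lemma norm_exp_neg_I_div (b r : ℝ) :
    ‖Complex.exp (-(Complex.I / (2 * (b : ℂ))) * (r : ℂ))‖ = 1 := by
  have h : -(Complex.I / (2 * (b : ℂ))) * (r : ℂ)
      = Complex.I / (2 * (b : ℂ)) * ((-r : ℝ) : ℂ) := by push_cast; ring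
  rw [h, norm_exp_I_div]

/-- The OLCT convolution of two `L¹` functions is in `L¹` with the stated norm bound. -/
theorem olctConv_integrable (a b d u0 : ℝ) (hb : b ≠ 0)
    (f g : ℝ → ℂ) (hf : Integrable f) (hg : Integrable g) :
    Integrable (olctConv a b d u0 f g) ∧
      (∫ x : ℝ, ‖olctConv a b d u0 f g x‖) ≤
        Real.sqrt (4 / (2 * Real.pi * |b|)) * (∫ x : ℝ, ‖f x‖) * (∫ x : ℝ, ‖g x‖) := by
  set C : ℂ := (1 / (2 * (Real.pi : ℂ) * Complex.I * (b : ℂ))) ^ ((1 : ℂ) / 2) *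
    Complex.exp (Complex.I / (2 * (b : ℂ)) * ((d * u0 ^ 2 : ℝ) : ℂ)) with hCdef
  set K : ℝ × ℝ → ℂ := fun p => f p.2 * g (p.1 / 2 - p.2) *
      Complex.exp (-(Complex.I / (2 * (b : ℂ))) *
        ((a * ((p.1 / 2 + 2 * p.2) ^ 2 - 6 * p.2 ^ 2 + p.1 ^ 2 / 2) + p.1 * u0 : ℝ) : ℂ))
    with hKdef
  have hconv : olctConv a b d u0 f g = fun x => C * ∫ τ : ℝ, K (x, τ) := rfl
  have hKnorm : ∀ p : ℝ × ℝ, ‖K p‖ = ‖f p.2‖ * ‖g (p.1 / 2 - p.2)‖ := by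
    intro p
    rw [hKdef]
    simp only [norm_mul, norm_exp_neg_I_div, mul_one]
  -- quasi-measure-preserving map
  have hdiv2 : Measure.QuasiMeasurePreserving (fun x : ℝ => x / 2) volume volume := by
    refine ⟨by fun_prop, ?_⟩
    have h2 : (fun x : ℝ => x / 2) = (· * (2 : ℝ)⁻¹) := by
      funext x; rw [div_eq_mul_inv]
    rw [h2, Real.map_volume_mul_right (by norm_num : ((2 : ℝ)⁻¹) ≠ 0)]
    exact Measure.smul_absolutelyContinuous
  have hsub : ∀ τ : ℝ, Measure.QuasiMeasurePreserving (fun x : ℝ => x / 2 - τ) volume volume :=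
    fun τ => Measure.QuasiMeasurePreserving.comp
      ((measurePreserving_sub_right volume τ).quasiMeasurePreserving) hdiv2
  have hqmp : Measure.QuasiMeasurePreserving (fun p : ℝ × ℝ => p.1 / 2 - p.2)
      (volume.prod volume) volume :=
    MeasureTheory.QuasiMeasurePreserving.prod_of_left (by fun_prop) (Eventually.of_forall hsub)
  have hphase_cont : Continuous fun p : ℝ × ℝ => Complex.exp (-(Complex.I / (2 * (b : ℂ))) *
      ((a * ((p.1 / 2 + 2 * p.2) ^ 2 - 6 * p.2 ^ 2 + p.1 ^ 2 / 2) + p.1 * u0 : ℝ) : ℂ)) := by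
    fun_prop
  have hmeasK : AEStronglyMeasurable K (volume.prod volume) :=
    by
      have h1 : AEStronglyMeasurable (fun p : ℝ × ℝ => f p.2) (volume.prod volume) := hf.1.comp_snd
      have h2 : AEStronglyMeasurable (fun p : ℝ × ℝ => g (p.1 / 2 - p.2)) (volume.prod volume) :=
        hg.1.comp_quasiMeasurePreserving hqmp
      exact (h1.mul h2).mul hphase_cont.aestronglyMeasurable
  -- slices in x are integrable
  have hg' : ∀ τ : ℝ, Integrable (fun x : ℝ => g (x / 2 - τ)) := by
    intro τ
    have h1 : Integrable (fun x : ℝ => g (x / 2)) := hg.comp_div (by norm_num : (2:ℝ) ≠ 0)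
    have h2 := h1.comp_sub_right (2 * τ)
    exact h2.congr (Eventually.of_forall fun x => by
      simp only [show (x - 2 * τ) / 2 = x / 2 - τ from by ring])
  have hslice : ∀ τ : ℝ, Integrable (fun x => K (x, τ)) := by
    intro τ
    have hb' : Integrable (fun x : ℝ => f τ * g (x / 2 - τ)) := (hg' τ).const_mul _
    have hm : AEStronglyMeasurable (fun x : ℝ => Complex.exp (-(Complex.I / (2 * (b : ℂ))) *
        ((a * ((x / 2 + 2 * τ) ^ 2 - 6 * τ ^ 2 + x ^ 2 / 2) + x * u0 : ℝ) : ℂ))) volume := by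
      apply Continuous.aestronglyMeasurable; fun_prop
    have h3 := hb'.bdd_mul (c := 1) hm (Eventually.of_forall fun x => le_of_eq (norm_exp_neg_I_div b _))
    exact h3.congr (Eventually.of_forall fun x => mul_comm _ _)
  -- the x-integral of the norm
  have hxint : ∀ τ : ℝ, (∫ x : ℝ, ‖K (x, τ)‖) = ‖f τ‖ * (2 * ∫ x : ℝ, ‖g x‖) := by
    intro τ
    have e0 : (∫ x : ℝ, ‖K (x, τ)‖) = ∫ x : ℝ, ‖f τ‖ * ‖g (x / 2 - τ)‖ := by
      congr 1; funext x; exact hKnorm (x, τ)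
    have e1 : (∫ x : ℝ, ‖g (x / 2 - τ)‖) = |(2 : ℝ)| • ∫ y : ℝ, ‖g (y - τ)‖ :=
      Measure.integral_comp_div (fun y => ‖g (y - τ)‖) 2
    have e2 : (∫ y : ℝ, ‖g (y - τ)‖) = ∫ y : ℝ, ‖g y‖ :=
      integral_sub_right_eq_self (fun y => ‖g y‖) τ
    rw [e0, integral_const_mul, e1, e2, smul_eq_mul, _root_.abs_two]
  have hKint : Integrable K (volume.prod volume) := by
    rw [integrable_prod_iff' hmeasK]
    refine ⟨Eventually.of_forall hslice, ?_⟩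
    have : (fun τ : ℝ => ∫ x : ℝ, ‖K (x, τ)‖) = fun τ => ‖f τ‖ * (2 * ∫ x : ℝ, ‖g x‖) :=
      funext hxint
    rw [this]
    exact hf.norm.mul_const _
  have hI : Integrable (fun x : ℝ => ∫ τ : ℝ, K (x, τ)) := hKint.integral_prod_left
  have hInt : Integrable (olctConv a b d u0 f g) := by
    rw [hconv]; exact hI.const_mul C
  refine ⟨hInt, ?_⟩
  -- norm of the constant
  have hCnorm : ‖C‖ = Real.sqrt (1 / (2 * Real.pi * |b|)) := by
    rw [hCdef, norm_mul, norm_exp_I_div, mul_one]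
    have h12 : ((1 : ℂ) / 2) = (((1 : ℝ) / 2 : ℝ) : ℂ) := by norm_num
    rw [h12, Complex.norm_cpow_real]
    have habs : ‖(1 / (2 * (Real.pi : ℂ) * Complex.I * (b : ℂ)))‖
        = 1 / (2 * Real.pi * |b|) := by
      simp [norm_div, norm_mul, Complex.norm_real, Complex.norm_I,
        abs_of_pos Real.pi_pos]
    rw [habs, Real.sqrt_eq_rpow]
  have hRHSint : Integrable (fun x : ℝ => ∫ τ : ℝ, ‖K (x, τ)‖) := hKint.norm.integral_prod_left
  have h2sqrt : Real.sqrt (4 / (2 * Real.pi * |b|))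
      = 2 * Real.sqrt (1 / (2 * Real.pi * |b|)) := by
    rw [show (4 : ℝ) / (2 * Real.pi * |b|) = 4 * (1 / (2 * Real.pi * |b|)) by ring,
      Real.sqrt_mul (by norm_num), show (4 : ℝ) = 2 ^ 2 by norm_num, Real.sqrt_sq (by norm_num)]
  calc (∫ x : ℝ, ‖olctConv a b d u0 f g x‖)
      = ∫ x : ℝ, ‖C‖ * ‖∫ τ : ℝ, K (x, τ)‖ := by
        simp only [hconv, norm_mul]
    _ = ‖C‖ * ∫ x : ℝ, ‖∫ τ : ℝ, K (x, τ)‖ := integral_const_mul _ _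
    _ ≤ ‖C‖ * ∫ x : ℝ, ∫ τ : ℝ, ‖K (x, τ)‖ := by
        refine mul_le_mul_of_nonneg_left ?_ (norm_nonneg _)
        exact integral_mono hI.norm hRHSint fun x => norm_integral_le_integral_norm _
    _ = ‖C‖ * ∫ τ : ℝ, ∫ x : ℝ, ‖K (x, τ)‖ := by
        rw [integral_integral_swap hKint.norm]
    _ = ‖C‖ * ∫ τ : ℝ, ‖f τ‖ * (2 * ∫ x : ℝ, ‖g x‖) := by
        simp_rw [hxint]
    _ = ‖C‖ * ((∫ τ : ℝ, ‖f τ‖) * (2 * ∫ x : ℝ, ‖g x‖)) := by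
        rw [integral_mul_const]
    _ = Real.sqrt (4 / (2 * Real.pi * |b|)) * (∫ x : ℝ, ‖f x‖) * (∫ x : ℝ, ‖g x‖) := by
        rw [hCnorm, h2sqrt]; ring
end

section
/- Let $f \in L^1(\mathbb{R})$ be infinitely differentiable with all derivatives in $L^1$, decaying at infinity together with $f$. Define $\Delta_x = -\left(\frac{\partial}{\partial x} + \frac{i}{b}(a x + u_0)\right)$. Then for every $n \in \mathbb{N}$, $(\mathcal{O}^M \Delta_x^n f)(u) = \left(-\frac{i}{b} u\right)^n (\mathcal{O}^M f)(u)$. -/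
open MeasureTheory Complex Filter

noncomputable def olctDelta (a b u0 : ℝ) (h : ℝ → ℂ) : ℝ → ℂ :=
  fun x => -(deriv h x + Complex.I / (b : ℂ) * ((a * x + u0 : ℝ) : ℂ) * h x)

/-- The kernel, rewritten as a fixed constant times a complex exponential of a
complex polynomial in the (complexified) variable. -/
lemma olctKernel_eq (a b d u0 w0 : ℝ) (u y : ℝ) :
    olctKernel a b d u0 w0 u y =
      ((1 / (2 * (Real.pi : ℂ) * Complex.I * (b : ℂ))) ^ ((1 : ℂ) / 2) *
        Complex.exp (Complex.I / (2 * (b : ℂ)) * ((d * u0 ^ 2 : ℝ) : ℂ))) *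
      Complex.exp (Complex.I / (2 * (b : ℂ)) *
        ((a : ℂ) * (y : ℂ) ^ 2 + 2 * (y : ℂ) * ((u0 : ℂ) - (u : ℂ)) -
          2 * (u : ℂ) * ((d : ℂ) * (u0 : ℂ) - (b : ℂ) * (w0 : ℂ)) + (d : ℂ) * (u : ℂ) ^ 2)) := by
  unfold olctKernel
  push_cast
  ring

lemma olctKernel_hasDerivAt (a b d u0 w0 : ℝ) (hb : b ≠ 0) (u x : ℝ) :
    HasDerivAt (fun x : ℝ => olctKernel a b d u0 w0 u x)
      (Complex.I / (b : ℂ) * ((a : ℂ) * (x : ℂ) + (u0 : ℂ) - (u : ℂ)) *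
        olctKernel a b d u0 w0 u x) x := by
  have hbc : (b : ℂ) ≠ 0 := by exact_mod_cast hb
  set C : ℂ := (1 / (2 * (Real.pi : ℂ) * Complex.I * (b : ℂ))) ^ ((1 : ℂ) / 2) *
      Complex.exp (Complex.I / (2 * (b : ℂ)) * ((d * u0 ^ 2 : ℝ) : ℂ)) with hC
  set c1 : ℂ := 2 * (u : ℂ) * ((d : ℂ) * (u0 : ℂ) - (b : ℂ) * (w0 : ℂ)) with hc1
  set c2 : ℂ := (d : ℂ) * (u : ℂ) ^ 2 with hc2
  -- derivative of the inner complex polynomial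
  have hpoly : ∀ z : ℂ, HasDerivAt
      (fun z : ℂ => (a : ℂ) * z ^ 2 + 2 * z * ((u0 : ℂ) - (u : ℂ)) - c1 + c2)
      ((a : ℂ) * (2 * z) + 2 * ((u0 : ℂ) - (u : ℂ))) z := by
    intro z
    have h2 : HasDerivAt (fun z : ℂ => (a : ℂ) * z ^ 2) ((a : ℂ) * (2 * z)) z := by
      simpa using (hasDerivAt_pow 2 z).const_mul (a : ℂ)
    have h3 : HasDerivAt (fun z : ℂ => 2 * z * ((u0 : ℂ) - (u : ℂ)))
        (2 * ((u0 : ℂ) - (u : ℂ))) z := by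
      simpa using ((hasDerivAt_id z).const_mul (2 : ℂ)).mul_const ((u0 : ℂ) - (u : ℂ))
    exact ((h2.add h3).sub_const c1).add_const c2
  have hE : ∀ z : ℂ, HasDerivAt
      (fun z : ℂ => C * Complex.exp (Complex.I / (2 * (b : ℂ)) *
        ((a : ℂ) * z ^ 2 + 2 * z * ((u0 : ℂ) - (u : ℂ)) - c1 + c2)))
      (C * (Complex.exp (Complex.I / (2 * (b : ℂ)) *
        ((a : ℂ) * z ^ 2 + 2 * z * ((u0 : ℂ) - (u : ℂ)) - c1 + c2)) *
        (Complex.I / (2 * (b : ℂ)) * ((a : ℂ) * (2 * z) + 2 * ((u0 : ℂ) - (u : ℂ)))))) z := by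
    intro z
    exact (((hpoly z).const_mul (Complex.I / (2 * (b : ℂ)))).cexp).const_mul C
  have hEx := (hE (x : ℂ)).comp_ofReal
  have hfun : (fun y : ℝ => C * Complex.exp (Complex.I / (2 * (b : ℂ)) *
      ((a : ℂ) * (y : ℂ) ^ 2 + 2 * (y : ℂ) * ((u0 : ℂ) - (u : ℂ)) - c1 + c2))) =
      fun y : ℝ => olctKernel a b d u0 w0 u y := by
    funext y
    rw [olctKernel_eq a b d u0 w0 u y, hC, hc1, hc2]
  rw [hfun] at hEx
  convert hEx using 1
  rw [olctKernel_eq a b d u0 w0 u x, hC, hc1, hc2]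
  field_simp
  ring

lemma olctKernel_norm (a b d u0 w0 : ℝ) (u x : ℝ) :
    ‖olctKernel a b d u0 w0 u x‖ =
      ‖(1 / (2 * (Real.pi : ℂ) * Complex.I * (b : ℂ))) ^ ((1 : ℂ) / 2)‖ := by
  unfold olctKernel
  have h1 : Complex.I / (2 * (b : ℂ)) * ((d * u0 ^ 2 : ℝ) : ℂ) =
      ((d * u0 ^ 2 / (2 * b) : ℝ) : ℂ) * Complex.I := by push_cast; ring
  have h2 : Complex.I / (2 * (b : ℂ)) *
      ((a * x ^ 2 + 2 * x * (u0 - u) - 2 * u * (d * u0 - b * w0) + d * u ^ 2 : ℝ) : ℂ) =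
      (((a * x ^ 2 + 2 * x * (u0 - u) - 2 * u * (d * u0 - b * w0) + d * u ^ 2) / (2 * b) : ℝ) : ℂ)
        * Complex.I := by push_cast; ring
  rw [h1, h2, norm_mul, norm_mul]
  simp only [Complex.norm_exp_ofReal_mul_I, mul_one]

lemma olctKernel_continuous (a b d u0 w0 : ℝ) (u : ℝ) :
    Continuous (fun x : ℝ => olctKernel a b d u0 w0 u x) := by
  unfold olctKernel
  fun_prop

lemma integrable_olctKernel_mul (a b d u0 w0 : ℝ) (u : ℝ) {g : ℝ → ℂ}
    (hgi : Integrable g) :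
    Integrable (fun x : ℝ => olctKernel a b d u0 w0 u x * g x) :=
  hgi.bdd_mul ((olctKernel_continuous a b d u0 w0 u).aestronglyMeasurable)
    (Filter.Eventually.of_forall fun x => le_of_eq (olctKernel_norm a b d u0 w0 u x))

/-- olctDelta preserves smoothness. -/
lemma contDiff_olctDelta (a b u0 : ℝ) {g : ℝ → ℂ} (hg : ContDiff ℝ (⊤ : ℕ∞) g) :
    ContDiff ℝ (⊤ : ℕ∞) (olctDelta a b u0 g) := by
  have hω : ((⊤ : ℕ∞) : WithTop ℕ∞) = ((⊤ : ℕ∞) : WithTop ℕ∞) + 1 := by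
    rw [← WithTop.coe_one, ← WithTop.coe_add, top_add]
  have hd : ContDiff ℝ (⊤ : ℕ∞) (deriv g) := by
    rw [hω] at hg
    exact (contDiff_succ_iff_deriv.mp hg).2.2
  have hlin : ContDiff ℝ (⊤ : ℕ∞) (fun x : ℝ => ((a * x + u0 : ℝ) : ℂ)) :=
    Complex.ofRealCLM.contDiff.comp ((contDiff_const.mul contDiff_id).add contDiff_const)
  unfold olctDelta
  exact (hd.add ((contDiff_const.mul hlin).mul hg)).neg

/-- The one-step identity. -/
lemma olct_step (a b d u0 w0 : ℝ) (hb : b ≠ 0) (u : ℝ) {g : ℝ → ℂ}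
    (hg : ContDiff ℝ (⊤ : ℕ∞) g) (hgi : Integrable g) (hdi : Integrable (olctDelta a b u0 g)) :
    olct a b d u0 w0 (olctDelta a b u0 g) u =
      -(Complex.I / (b : ℂ)) * (u : ℂ) * olct a b d u0 w0 g u := by
  set K := fun x : ℝ => olctKernel a b d u0 w0 u x with hK
  have hKg : Integrable (fun x => K x * g x) := integrable_olctKernel_mul a b d u0 w0 u hgi
  have hKd : Integrable (fun x => K x * olctDelta a b u0 g x) :=
    integrable_olctKernel_mul a b d u0 w0 u hdi
  have hgd : ∀ x, HasDerivAt g (deriv g x) x := fun x =>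
    ((hg.differentiable (by simp)) x).hasDerivAt
  set F' := fun x : ℝ => Complex.I / (b : ℂ) * ((a : ℂ) * (x : ℂ) + (u0 : ℂ) - (u : ℂ)) * K x * g x
      + K x * deriv g x with hF'def
  have hF : ∀ x, HasDerivAt (fun x => K x * g x) (F' x) x := fun x =>
    (olctKernel_hasDerivAt a b d u0 w0 hb u x).mul (hgd x)
  have hid : ∀ x, K x * olctDelta a b u0 g x
      = -(F' x) + (-(Complex.I / (b : ℂ)) * (u : ℂ)) * (K x * g x) := by
    intro x
    simp only [hF'def, olctDelta]
    push_cast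
    ring
  have hF'int : Integrable F' := by
    have heq : F' = fun x => -(K x * olctDelta a b u0 g x)
        + (-(Complex.I / (b : ℂ)) * (u : ℂ)) * (K x * g x) := by
      funext x
      linear_combination hid x
    rw [heq]
    exact hKd.neg.add (hKg.const_mul _)
  have hzero : ∫ x, F' x = 0 :=
    integral_eq_zero_of_hasDerivAt_of_integrable hF hF'int hKg
  have step1 : olct a b d u0 w0 (olctDelta a b u0 g) u
      = ∫ x, (-(F' x) + (-(Complex.I / (b : ℂ)) * (u : ℂ)) * (K x * g x)) := by
    unfold olct
    exact integral_congr_ae (Filter.Eventually.of_forall fun x => hid x)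
  have h1 : Integrable (fun x => -F' x) := hF'int.neg
  rw [step1, integral_add h1 (hKg.const_mul _), integral_neg, hzero,
    integral_const_mul, neg_zero, zero_add]
  rfl

/-- Derivative formula for the OLCT. -/
theorem olct_delta_formula (a b d u0 w0 : ℝ) (hb : b ≠ 0)
    (f : ℝ → ℂ) (hf : Integrable f) (hsmooth : ContDiff ℝ (⊤ : ℕ∞) f)
    (hint : ∀ n : ℕ, Integrable ((olctDelta a b u0)^[n] f))
    (hdecay : ∀ n : ℕ, Tendsto (iteratedDeriv n f) (cocompact ℝ) (nhds 0))
    (n : ℕ) (u : ℝ) :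
    olct a b d u0 w0 ((olctDelta a b u0)^[n] f) u =
      (-(Complex.I / (b : ℂ)) * (u : ℂ)) ^ n * olct a b d u0 w0 f u := by
  have hsm : ∀ m : ℕ, ContDiff ℝ (⊤ : ℕ∞) ((olctDelta a b u0)^[m] f) := by
    intro m
    induction m with
    | zero => simpa using hsmooth
    | succ k ihk =>
      rw [Function.iterate_succ_apply']
      exact contDiff_olctDelta a b u0 ihk
  induction n with
  | zero => simp
  | succ n ih =>
    rw [Function.iterate_succ_apply',
      olct_step a b d u0 w0 hb u (hsm n) (hint n)
        (by simpa [Function.iterate_succ_apply'] using hint (n + 1)),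
      ih, pow_succ]
    ring
end
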